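/- arXiv:2101.09719 — 2 statements merged into one kernel-verified Lean document; each statement's English description precedes it below -/
import Mathlib

section
/- Let a be an odd natural number of rank n (i.e., v2(a+1) = n). Then for every j with 0 ≤ j ≤ n - 1, the j-th iterate of the Syracuse map satisfies Syr^j(a) = (a+1)·3^j/2^j - 1. -/
/-- The Syracuse map: next odd number in the Collatz orbit. -/
def syr (n : ℕ) : ℕ := (3 * n + 1) / 2 ^ padicValNat 2 (3 * n + 1)

lemma syr_step (b j k : ℕ) (hb : Odd b) (hk : 2 ≤ k) :
    syr (2 ^ k * 3 ^ j * b - 1) = 2 ^ (k-1) * 3 ^ (j+1) * b - 1 := by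
  obtain ⟨m, rfl⟩ : ∃ m, k = m + 2 := ⟨k - 2, by omega⟩
  set P := 2 ^ m * 3 ^ j * b with hP
  have hP1 : 1 ≤ P := Nat.one_le_iff_ne_zero.mpr (by
    have hbp : b ≠ 0 := by rcases hb with ⟨c, hc⟩; omega
    positivity)
  have e1 : 2 ^ (m+2) * 3 ^ j * b = 4 * P := by
    rw [hP, pow_add]; ring
  have e2 : 2 ^ (m+2-1) * 3 ^ (j+1) * b = 6 * P := by
    rw [hP, show m + 2 - 1 = m + 1 from rfl, pow_add, pow_succ]; ring
  rw [e1, e2]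
  have hx : 3 * (4 * P - 1) + 1 = 2 * (6 * P - 1) := by omega
  have hodd : ¬ (2 ∣ (6 * P - 1)) := by omega
  have hv : padicValNat 2 (3 * (4 * P - 1) + 1) = 1 := by
    rw [hx, padicValNat.mul (by norm_num) (by omega), padicValNat.self (by norm_num),
      padicValNat.eq_zero_of_not_dvd hodd]
  rw [syr, hv, hx, pow_one, Nat.mul_div_cancel_left _ (by norm_num)]

theorem stmt_5 (a n : ℕ) (ha : Odd a) (hn : padicValNat 2 (a + 1) = n) :
    ∀ j, j ≤ n - 1 → syr^[j] a = (a + 1) * 3 ^ j / 2 ^ j - 1 := by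
  have hne : a + 1 ≠ 0 := by omega
  have hdvd : 2 ^ n ∣ a + 1 := by
    rw [← hn]; exact pow_padicValNat_dvd
  obtain ⟨b, hb⟩ := hdvd
  have hbodd : Odd b := by
    rcases Nat.even_or_odd b with he | ho
    · exfalso
      rcases he with ⟨c, hc⟩
      have hd : 2 ^ (n+1) ∣ a + 1 := ⟨c, by rw [hb, hc]; ring⟩
      have := (padicValNat_dvd_iff_le (p := 2) hne).mp hd
      omega
    · exact ho
  have hn1 : 1 ≤ n := by
    rcases ha with ⟨c, hc⟩
    by_contra h
    have hn0 : n = 0 := by omega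
    rw [hn0, pow_zero, one_mul] at hb
    rcases hbodd with ⟨d, hd⟩
    omega
  have key : ∀ j, j ≤ n - 1 → syr^[j] a = 2 ^ (n - j) * 3 ^ j * b - 1 := by
    intro j
    induction j with
    | zero => intro _; simp; omega
    | succ j ih =>
      intro hj
      rw [Function.iterate_succ_apply', ih (by omega), syr_step b j (n - j) hbodd (by omega)]
      congr 2
  intro j hj
  rw [key j hj]
  congr 2
  rw [hb]
  rw [show 2 ^ n = 2 ^ j * 2 ^ (n - j) by rw [← pow_add]; congr 1; omega]
  rw [show 2 ^ j * 2 ^ (n-j) * b * 3 ^ j = 2 ^ j * (2 ^ (n-j) * 3 ^ j * b) by ring,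
    Nat.mul_div_cancel_left _ (by positivity)]
end

section
/- Let b be an odd natural number and k ≥ 1. Then the k-th iterate of the Syracuse map applied to 2^{2k+1}·b + 1 equals 2·3^k·b + 1. -/
lemma syr_step_s11 (j m : ℕ) :
    syr (2 ^ (2 * j + 3) * m + 1) = 2 ^ (2 * j + 1) * 3 * m + 1 := by
  set n := 2 ^ (2 * j + 1) * 3 * m + 1 with hn
  have hodd : Odd n := by
    refine Even.add_one ?_
    have : Even ((2:ℕ) ^ (2 * j + 1)) := by
      simp [Nat.even_pow]
    exact (this.mul_right 3).mul_right m
  have heq : 3 * (2 ^ (2 * j + 3) * m + 1) + 1 = 4 * n := by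
    have h4 : (2:ℕ) ^ (2 * j + 3) = 4 * 2 ^ (2 * j + 1) := by ring
    rw [hn, h4]; ring
  have hv : padicValNat 2 (4 * n) = 2 := by
    have hn0 : n ≠ 0 := by positivity
    rw [padicValNat.mul (by norm_num) hn0]
    have h1 : padicValNat 2 4 = 2 := by
      have : (4:ℕ) = 2 ^ 2 := by norm_num
      rw [this, padicValNat.prime_pow]
    have h2 : padicValNat 2 n = 0 :=
      padicValNat.eq_zero_of_not_dvd (by
        rw [Nat.two_dvd_ne_zero, Nat.odd_iff.mp hodd])
    omega
  rw [syr, heq, hv]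
  norm_num

theorem stmt_11 (b k : ℕ) (hb : Odd b) (hk : 1 ≤ k) :
    syr^[k] (2 ^ (2 * k + 1) * b + 1) = 2 * 3 ^ k * b + 1 := by
  have key : ∀ j, j ≤ k →
      syr^[j] (2 ^ (2 * k + 1) * b + 1) = 2 ^ (2 * (k - j) + 1) * 3 ^ j * b + 1 := by
    intro j hj
    induction j with
    | zero => simp
    | succ j ih =>
      have hj' : j ≤ k := by omega
      rw [Function.iterate_succ_apply', ih hj']
      obtain ⟨t, ht⟩ : ∃ t, k - j = t + 1 := ⟨k - j - 1, by omega⟩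
      have e1 : 2 ^ (2 * (k - j) + 1) * 3 ^ j * b + 1
          = 2 ^ (2 * t + 3) * (3 ^ j * b) + 1 := by
        rw [show 2 * (k - j) + 1 = 2 * t + 3 by omega]; ring
      rw [e1, syr_step_s11]
      rw [show k - (j + 1) = t by omega]; ring
  have := key k le_rfl
  simpa using this
end
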